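/- arXiv:2404.06888 — 5 statements merged into one kernel-verified Lean document; each statement's English description precedes it below -/
import Mathlib

section
/- For all positive integers n and m, the product lcm{1,...,n} · lcm{1,...,m} divides lcm{1,...,n·m}. -/
/-! Multiplication distributes over the lcm of a nonempty family, so `L(n) * L(m)` is the lcm of all
products `a * b` with `a ≤ n`, `b ≤ m`, and each such product lies in `[1, n * m]`. -/

namespace Finset

variable {α β γ : Type*} [CommMonoidWithZero α]

theorem lcm_normalize [NormalizedGCDMonoid α] (s : Finset β) (f : β → α) :
    (s.lcm fun x ↦ normalize (f x)) = s.lcm f :=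
  dvd_antisymm_of_normalize_eq normalize_lcm normalize_lcm
    (lcm_mono_fun fun _ _ ↦ (normalize_associated _).dvd)
    (lcm_mono_fun fun _ _ ↦ (associated_normalize _).dvd)

variable [StrongNormalizedGCDMonoid α]

theorem Nonempty.lcm_mul_left {s : Finset β} (hs : s.Nonempty) (f : β → α) (a : α) :
    (s.lcm fun x ↦ a * f x) = normalize a * s.lcm f := by
  classical
  induction hs using Nonempty.cons_induction with
  | singleton b => simp
  | cons b t hb ht ih =>
    rw [cons_eq_insert, lcm_insert, lcm_insert, ih,
      lcm_eq_of_associated_left ((associated_normalize a).mul_right (f b)), _root_.lcm_mul_left,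
      normalize_idem]

theorem lcm_mul_lcm {s : Finset β} {t : Finset γ} (hs : s.Nonempty) (ht : t.Nonempty)
    (f : β → α) (g : γ → α) :
    s.lcm f * t.lcm g = s.lcm fun i ↦ t.lcm fun j ↦ f i * g j := by
  simp_rw [ht.lcm_mul_left, mul_comm _ (t.lcm g), hs.lcm_mul_left, normalize_lcm, lcm_normalize]

end Finset

theorem lcm_mul_dvd_lcm (n m : ℕ) (hn : 0 < n) (hm : 0 < m) :
    (Finset.Icc 1 n).lcm id * (Finset.Icc 1 m).lcm id ∣ (Finset.Icc 1 (n * m)).lcm id := by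
  rw [Finset.lcm_mul_lcm (Finset.nonempty_Icc.2 hn) (Finset.nonempty_Icc.2 hm)]
  refine Finset.lcm_dvd fun a ha ↦ Finset.lcm_dvd fun b hb ↦ Finset.dvd_lcm ?_
  rw [Finset.mem_Icc] at ha hb ⊢
  exact ⟨Nat.mul_le_mul ha.1 hb.1, Nat.mul_le_mul ha.2 hb.2⟩
end

section
/- For every integer n ≥ 9, lcm{1, 2, ..., n} > 2^n. -/
/-!
Nair's argument. For every prime `p`, the `p`-adic valuation of `k * choose n k` is at most
`log p n`, because adding `k` and `n - k` in base `p` produces no carry in the lowest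
`v_p(k)` digits; hence `k * choose n k ∣ lcm {1, …, n}`. Applied to `choose (2m) m` and to
`choose (2m+1) (m+1) = (2m+1)/(m+1) * choose (2m) m`, this shows that
`m (2m+1) centralBinom m ∣ lcm {1, …, 2m+1}`, and `m centralBinom m > 4 ^ m` for `m ≥ 4`.
-/

open Finset

namespace Nat

theorem factorization_choose_add_factorization_le_log {p n k : ℕ} (hp : p.Prime) (hk : k ≠ 0)
    (hkn : k ≤ n) : (n.choose k).factorization p + k.factorization p ≤ p.log n := by
  set a := k.factorization p
  have hpa : p ^ a ∣ k := ordProj_dvd k p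
  have ha : a ≤ p.log n :=
    le_log_of_pow_le hp.one_lt ((le_of_dvd (pos_of_ne_zero hk) hpa).trans hkn)
  have hcarries : {i ∈ Ico 1 (p.log n + 1) | p ^ i ≤ k % p ^ i + (n - k) % p ^ i} ⊆
      Ico (a + 1) (p.log n + 1) := by
    intro i hi
    simp only [mem_filter, mem_Ico] at hi ⊢
    obtain ⟨⟨-, hiL⟩, hcarry⟩ := hi
    refine ⟨?_, hiL⟩
    by_contra! hia
    have hk0 : k % p ^ i = 0 := mod_eq_zero_of_dvd ((pow_dvd_pow p (by omega)).trans hpa)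
    have := mod_lt (n - k) (pow_pos hp.pos i)
    omega
  rw [factorization_choose hp hkn (lt_add_one _)]
  have := card_le_card hcarries
  rw [card_Ico] at this
  omega

theorem mul_choose_dvd_lcmUpto {n k : ℕ} (hk : k ≠ 0) (hkn : k ≤ n) :
    k * n.choose k ∣ lcmUpto n := by
  have hchoose : n.choose k ≠ 0 := (choose_pos hkn).ne'
  rw [← factorization_prime_le_iff_dvd (mul_ne_zero hk hchoose) (lcmUpto_ne_zero n)]
  intro p hp
  rw [factorization_mul hk hchoose, Finsupp.add_apply, factorization_lcmUpto n hp, add_comm]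
  exact factorization_choose_add_factorization_le_log hp hk hkn

theorem lcmUpto_dvd_lcmUpto {m n : ℕ} (h : m ≤ n) : lcmUpto m ∣ lcmUpto n :=
  lcm_mono (Icc_subset_Icc_right h)

theorem mul_two_mul_add_one_mul_centralBinom_dvd_lcmUpto {m : ℕ} (hm : m ≠ 0) :
    m * (2 * m + 1) * centralBinom m ∣ lcmUpto (2 * m + 1) := by
  have hsmall : m * centralBinom m ∣ lcmUpto (2 * m + 1) :=
    (mul_choose_dvd_lcmUpto hm (by omega)).trans (lcmUpto_dvd_lcmUpto (by omega))
  have hlarge : (2 * m + 1) * centralBinom m ∣ lcmUpto (2 * m + 1) := by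
    have hshift : (2 * m + 1) * centralBinom m = (m + 1) * (2 * m + 1).choose (m + 1) := by
      rw [centralBinom_eq_two_mul_choose, add_one_mul_choose_eq, mul_comm]
    rw [hshift]
    exact mul_choose_dvd_lcmUpto (succ_ne_zero m) (by omega)
  have hcop : Coprime m (2 * m + 1) := by simp
  have := Nat.lcm_dvd hsmall hlarge
  rwa [Nat.lcm_mul_right, hcop.lcm_eq_mul] at this

theorem mul_four_pow_lt_lcmUpto {m : ℕ} (hm : 4 ≤ m) :
    (2 * m + 1) * 4 ^ m < lcmUpto (2 * m + 1) :=
  calc (2 * m + 1) * 4 ^ m < (2 * m + 1) * (m * centralBinom m) :=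
        Nat.mul_lt_mul_of_pos_left (four_pow_lt_mul_centralBinom m hm) (succ_pos _)
    _ = m * (2 * m + 1) * centralBinom m := by ring
    _ ≤ lcmUpto (2 * m + 1) :=
        le_of_dvd (lcmUpto_pos _) (mul_two_mul_add_one_mul_centralBinom_dvd_lcmUpto (by omega))

end Nat

theorem two_pow_lt_lcm (n : ℕ) (hn : 9 ≤ n) :
    2 ^ n < (Finset.Icc 1 n).lcm id := by
  obtain ⟨m, hm, hmn, hnm⟩ : ∃ m, 4 ≤ m ∧ 2 * m + 1 ≤ n ∧ n ≤ 2 * m + 2 :=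
    ⟨(n - 1) / 2, by omega, by omega, by omega⟩
  calc 2 ^ n ≤ 2 ^ (2 * m + 2) := Nat.pow_le_pow_right two_pos hnm
    _ = 4 * 4 ^ m := by rw [pow_add, pow_mul]; norm_num [mul_comm]
    _ ≤ (2 * m + 1) * 4 ^ m := Nat.mul_le_mul_right _ (by omega)
    _ < Nat.lcmUpto (2 * m + 1) := Nat.mul_four_pow_lt_lcmUpto hm
    _ ≤ Nat.lcmUpto n := Nat.le_of_dvd (Nat.lcmUpto_pos n) (Nat.lcmUpto_dvd_lcmUpto hmn)
end

section
/- If r is a positive integer with r > 2^8 = 256, then there exists a positive integer d with d ≤ ⌈log₂ r⌉ such that d does not divide r. -/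
/-!
If every `d ≤ n = ⌈log₂ r⌉` divides `r`, then `lcm(1, …, n) ∣ r`, so `lcm(1, …, n) ≤ r ≤ 2 ^ n`.
But `k * C(n, k)` divides `lcm(1, …, n)`: by Kummer, for each prime `p` the carries in
`k + (n - k)` and the powers `p ^ i ∣ k` occupy disjoint positions `1 ≤ i ≤ log_p n`.
With `k = ⌈n / 2⌉` the central binomial bound `4 ^ m < m * C(2m, m)` gives `2 ^ n < lcm(1, …, n)`
for `n ≥ 8`.
-/

open Nat Finset Chebyshev

theorem Nat.factorization_choose_add_factorization_le_log_s3 {p n k : ℕ} (hk0 : k ≠ 0)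
    (hkn : k ≤ n) : (choose n k).factorization p + k.factorization p ≤ log p n := by
  by_cases hp : p.Prime
  swap
  · simp [factorization_eq_zero_of_not_prime _ hp]
  have hdisj : Disjoint {i ∈ Ico 1 (log p n).succ | p ^ i ≤ k % p ^ i + (n - k) % p ^ i}
      {i ∈ Ico 1 (log p n).succ | p ^ i ∣ k} := by
    simp +contextual [Finset.disjoint_right, dvd_iff_mod_eq_zero, Nat.mod_lt _ (pow_pos hp.pos _)]
  rw [factorization_choose hp hkn (lt_succ_self _),
    factorization_eq_card_pow_dvd_of_lt hp (pos_of_ne_zero hk0)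
      ((lt_pow_succ_log_self hp.one_lt n).trans_le' hkn),
    ← card_union_of_disjoint hdisj, filter_union_right]
  exact (card_filter_le _ _).trans_eq (card_Ico _ _)

theorem Chebyshev.mul_choose_dvd_lcmUpto {n k : ℕ} (hk0 : k ≠ 0) (hkn : k ≤ n) :
    k * choose n k ∣ lcmUpto n := by
  rw [← factorization_prime_le_iff_dvd (mul_ne_zero hk0 (choose_ne_zero hkn))
    (lcmUpto_ne_zero n)]
  intro p hp
  rw [Nat.factorization_mul hk0 (choose_ne_zero hkn), factorization_lcmUpto n hp,
    Finsupp.add_apply, add_comm]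
  exact factorization_choose_add_factorization_le_log_s3 hk0 hkn

theorem Chebyshev.two_pow_lt_lcmUpto {n : ℕ} (hn : 8 ≤ n) : 2 ^ n < lcmUpto n := by
  obtain ⟨m, rfl | rfl⟩ := even_or_odd' n
  · have hm : 4 ≤ m := by omega
    calc 2 ^ (2 * m) = 4 ^ m := by rw [pow_mul]; norm_num
      _ < m * centralBinom m := four_pow_lt_mul_centralBinom m hm
      _ ≤ lcmUpto (2 * m) :=
        le_of_dvd (lcmUpto_pos _) (mul_choose_dvd_lcmUpto (by omega) (by omega))
  · have hm : 4 ≤ m := by omega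
    have hcentral := four_pow_lt_mul_centralBinom m hm
    calc 2 ^ (2 * m + 1) = 2 * 4 ^ m := by rw [pow_succ, pow_mul]; norm_num; ring
      _ < (2 * m + 1) * centralBinom m := by nlinarith
      _ = (m + 1) * choose (2 * m + 1) (m + 1) := by
        rw [centralBinom_eq_two_mul_choose, add_one_mul_choose_eq, mul_comm]
      _ ≤ lcmUpto (2 * m + 1) :=
        le_of_dvd (lcmUpto_pos _) (mul_choose_dvd_lcmUpto (by omega) (by omega))

theorem exists_small_nondivisor (r : ℕ) (hr : 2 ^ 8 < r) :
    ∃ d : ℕ, 0 < d ∧ d ≤ Nat.clog 2 r ∧ ¬ d ∣ r := by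
  by_contra! hdvd
  have hlcm : lcmUpto (clog 2 r) ∣ r :=
    Finset.lcm_dvd fun d hd ↦ hdvd d (mem_Icc.mp hd).1 (mem_Icc.mp hd).2
  have hn : 8 < clog 2 r := (lt_clog_iff_pow_lt one_lt_two).mpr hr
  refine lt_irrefl r ?_
  calc r ≤ 2 ^ clog 2 r := le_pow_clog one_lt_two r
    _ < lcmUpto (clog 2 r) := two_pow_lt_lcmUpto hn.le
    _ ≤ r := le_of_dvd (by omega) hlcm
end

section
/- For j ≥ 1, define the rational number α_j = Σ_{i=0}^{j} 3^(2^i) / 3^(2^j). Then the sequence (α_j) is strictly decreasing for j ≥ 1, i.e., α_{j+1} < α_j for all j ≥ 1. -/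
/-! With `x = 3 ^ 2 ^ j` and `s = ∑ i < j, 3 ^ 2 ^ i`, the two sides are `(s + x + x²) / x²` and
`(s + x) / x`, and the inequality between them reduces to `s + x < s * x`, which holds because
`s ≥ 3` (its `i = 0` term) and `x ≥ 3`. -/

open Finset

theorem div_sq_lt_div_of_add_lt_mul {K : Type*} [Field K] [LinearOrder K] [IsStrictOrderedRing K]
    {s x : K} (hx : 0 < x) (h : s + x < s * x) : (s + x + x ^ 2) / x ^ 2 < (s + x) / x := by
  rw [div_lt_div_iff₀ (by positivity) hx]
  nlinarith [mul_lt_mul_of_pos_left h (mul_pos hx hx)]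

theorem three_le_sum_range_three_pow_two_pow {K : Type*} [Semiring K] [PartialOrder K]
    [IsOrderedRing K] {j : ℕ} (hj : 1 ≤ j) : (3 : K) ≤ ∑ i ∈ range j, (3 : K) ^ 2 ^ i := by
  calc (3 : K) = 3 ^ 2 ^ 0 := by rw [pow_zero, pow_one]
    _ ≤ ∑ i ∈ range j, (3 : K) ^ 2 ^ i :=
      single_le_sum (f := fun i => (3 : K) ^ 2 ^ i) (fun i _ => pow_nonneg zero_le_three _)
        (mem_range.2 hj)

theorem alpha_strict_anti (j : ℕ) (hj : 1 ≤ j) :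
    (∑ i ∈ Finset.range (j + 2), (3 : ℚ) ^ (2 ^ i)) / 3 ^ (2 ^ (j + 1)) <
      (∑ i ∈ Finset.range (j + 1), (3 : ℚ) ^ (2 ^ i)) / 3 ^ (2 ^ j) := by
  have hs : (3 : ℚ) ≤ ∑ i ∈ range j, (3 : ℚ) ^ 2 ^ i := three_le_sum_range_three_pow_two_pow hj
  have hx : (3 : ℚ) ≤ 3 ^ 2 ^ j := le_self_pow₀ (by norm_num) (by positivity)
  rw [sum_range_succ _ (j + 1), sum_range_succ _ j, pow_succ 2 j, pow_mul]
  exact div_sq_lt_div_of_add_lt_mul (by positivity) (by nlinarith)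
end

section
/- Let k ≥ 2, let n = 2^(2^k), and define D = ∏_{i=0}^{k-1} lcm{1, ..., 3^(2^i)}. Then D divides n!. -/
/-!
Since `lcm {1, …, m}` divides `m!`, the product divides `∏ (3 ^ 2 ^ i)!`, which divides the
multinomial denominator `(∑ 3 ^ 2 ^ i)!`. It remains to see `∑_{i<k} 3 ^ 2 ^ i ≤ 2 ^ 2 ^ k`:
each new term at most squares the running bound, as `4 ^ m + 9 ^ m ≤ 13 ^ m ≤ 16 ^ m`.
-/

open Finset

theorem Nat.lcm_Icc_one_dvd_factorial (m : ℕ) : (Icc 1 m).lcm id ∣ m.factorial :=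
  Finset.lcm_dvd fun _ hb => Nat.dvd_factorial (mem_Icc.mp hb).1 (mem_Icc.mp hb).2

theorem sum_range_succ_three_pow_two_pow_le (k : ℕ) :
    ∑ i ∈ range (k + 1), 3 ^ 2 ^ i ≤ 4 ^ 2 ^ k := by
  induction k with
  | zero => norm_num
  | succ k ih =>
    calc ∑ i ∈ range (k + 2), 3 ^ 2 ^ i
        = ∑ i ∈ range (k + 1), 3 ^ 2 ^ i + 9 ^ 2 ^ k := by
          rw [sum_range_succ, pow_succ, pow_mul']; norm_num
      _ ≤ 4 ^ 2 ^ k + 9 ^ 2 ^ k := by gcongr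
      _ ≤ 13 ^ 2 ^ k := pow_add_pow_le (Nat.zero_le _) (Nat.zero_le _)
          (pow_ne_zero _ two_ne_zero)
      _ ≤ 16 ^ 2 ^ k := by gcongr; norm_num
      _ = 4 ^ 2 ^ (k + 1) := by rw [pow_succ, pow_mul']; norm_num

theorem sum_range_three_pow_two_pow_le (k : ℕ) : ∑ i ∈ range k, 3 ^ 2 ^ i ≤ 2 ^ 2 ^ k := by
  cases k with
  | zero => norm_num
  | succ k =>
    calc ∑ i ∈ range (k + 1), 3 ^ 2 ^ i ≤ 4 ^ 2 ^ k := sum_range_succ_three_pow_two_pow_le k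
      _ = 2 ^ 2 ^ (k + 1) := by rw [pow_succ, pow_mul']; norm_num

theorem prod_lcm_dvd_factorial_general (k : ℕ) :
    (∏ i ∈ Finset.range k, (Finset.Icc 1 (3 ^ 2 ^ i)).lcm id) ∣ Nat.factorial (2 ^ 2 ^ k) :=
  calc (∏ i ∈ range k, (Icc 1 (3 ^ 2 ^ i)).lcm id)
      ∣ ∏ i ∈ range k, Nat.factorial (3 ^ 2 ^ i) :=
        prod_dvd_prod_of_dvd _ _ fun _ _ => Nat.lcm_Icc_one_dvd_factorial _
    _ ∣ Nat.factorial (∑ i ∈ range k, 3 ^ 2 ^ i) := Nat.prod_factorial_dvd_factorial_sum _ _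
    _ ∣ Nat.factorial (2 ^ 2 ^ k) := Nat.factorial_dvd_factorial (sum_range_three_pow_two_pow_le k)

theorem prod_lcm_dvd_factorial (k : ℕ) (hk : 2 ≤ k) :
    (∏ i ∈ Finset.range k, (Finset.Icc 1 (3 ^ 2 ^ i)).lcm id) ∣ Nat.factorial (2 ^ 2 ^ k) :=
  prod_lcm_dvd_factorial_general k
end
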